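/- arXiv:2009.12450 — 5 statements merged into one kernel-verified Lean document; each statement's English description precedes it below -/
import Mathlib

section
/- Let d be a positive integer. If some prime q ≡ 3 (mod 4) divides d to an odd power, then r₂(d) = 0. Otherwise, writing g_p for the exponent of each prime p ≡ 1 (mod 4) in the factorization of d, one has r₂(d) = 4 · ∏_{p ≡ 1 (mod 4)} (g_p + 1). -/
/-!
Count Gaussian integers instead of pairs: `r₂(d)` is the number of `z ∈ ℤ[i]` of norm `d`.
This count is computed one prime power `p ^ k ∥ d` at a time, writing `d = p ^ k * m`, by
comparing, for a Gaussian prime `π ∣ p`, the `π`-adic valuations on both sides of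
`z * star z = p ^ k * m`.

If `star π` is associated to `π` (`π = 1 + i` for `p = 2`, `π = p` for `p ≡ 3 mod 4`), the
valuation of `z * star z` is twice that of `z`. For `p ≡ 3 mod 4` it is also `k`, so nothing
has norm `d` when `k` is odd; in the remaining cases every `z` of norm `N π ^ e * m` is
`π ^ e * w` with `N w = m`, so the prime power does not change the count.

If `p ≡ 1 mod 4`, then `p = π * star π` with `π`, `star π` not associated, and
`v_π z + v_{star π} z = k`. Whether or not `π ∣ z` then splits the count as
`#(p ^ (k + 1) * m) = #(p ^ k * m) + #m`, whence the factor `k + 1`.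
-/

open Finset

/-- `r₂(d)`: the number of ordered pairs `(a,b) ∈ ℤ²` with `a² + b² = d`. -/
noncomputable def r2 (d : ℕ) : ℕ :=
  ((Finset.Icc (-(d : ℤ)) (d : ℤ) ×ˢ Finset.Icc (-(d : ℤ)) (d : ℤ)).filter
    (fun p => p.1 ^ 2 + p.2 ^ 2 = (d : ℤ))).card

/-- `n_k`: the smallest positive integer `n` with `r₂(n) = 4k`. -/
noncomputable def nk (k : ℕ) : ℕ := sInf {n : ℕ | 0 < n ∧ r2 n = 4 * k}

/-- The `i`-th prime congruent to 1 mod 4 (0-indexed, increasing order). -/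
noncomputable def nthP1 (i : ℕ) : ℕ := Nat.nth (fun p => p.Prime ∧ p % 4 = 1) i

section Multiplicity

variable {α : Type*}

theorem multiplicity_star_star [CommMonoid α] [StarMul α] (a b : α) :
    multiplicity (star a) (star b) = multiplicity a b :=
  multiplicity_map_eq (starMulAut : α ≃* α)

theorem multiplicity_pow_mul_of_not_dvd [CommMonoidWithZero α] [IsCancelMulZero α]
    [WfDvdMonoid α] {p x m : α} (hp : Prime p) (hx : x ≠ 0) (hm : ¬p ∣ m) (k : ℕ) :
    multiplicity p (x ^ k * m) = k * multiplicity p x := by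
  have hm0 : m ≠ 0 := by rintro rfl; exact hm (dvd_zero p)
  rw [multiplicity_mul hp (.of_prime_left hp (mul_ne_zero (pow_ne_zero k hx) hm0)),
    (FiniteMultiplicity.of_prime_left hp hx).multiplicity_pow hp, multiplicity_eq_zero.2 hm,
    add_zero]

end Multiplicity

theorem Zsqrtd.norm_pow {d : ℤ} (z : ℤ√d) (k : ℕ) : (z ^ k).norm = z.norm ^ k :=
  map_pow Zsqrtd.normMonoidHom z k

theorem Nat.factorization_prod_pow_mul {β : Type*} [CommMonoid β] {p m : ℕ} (hp : p.Prime)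
    (hpm : ¬p ∣ m) (k : ℕ) {f : ℕ → ℕ → β} (hf : f p 0 = 1) :
    (p ^ k * m).factorization.prod f = f p k * m.factorization.prod f := by
  have hm0 : m ≠ 0 := by
    rintro rfl
    exact hpm (dvd_zero p)
  rw [Nat.factorization_mul (pow_ne_zero k hp.ne_zero) hm0, hp.factorization_pow,
    Finsupp.prod_add_index_of_disjoint, Finsupp.prod_single_index hf]
  refine Finset.disjoint_of_subset_left Finsupp.support_single_subset ?_
  rw [Finset.disjoint_singleton_left, Finsupp.notMem_support_iff]
  exact Nat.factorization_eq_zero_of_not_dvd hpm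

namespace GaussianInt

theorem norm_eq_sq_add_sq (z : GaussianInt) : z.norm = z.re ^ 2 + z.im ^ 2 := by
  rw [Zsqrtd.norm_def]; ring

theorem abs_re_le_norm (z : GaussianInt) : |z.re| ≤ z.norm := by
  rw [norm_eq_sq_add_sq, abs_le]
  constructor <;> nlinarith [Int.le_self_sq z.re, Int.le_self_sq (-z.re), sq_nonneg z.im]

theorem abs_im_le_norm (z : GaussianInt) : |z.im| ≤ z.norm := by
  rw [norm_eq_sq_add_sq, abs_le]
  constructor <;> nlinarith [Int.le_self_sq z.im, Int.le_self_sq (-z.im), sq_nonneg z.re]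

theorem finite_setOf_norm_eq (n : ℤ) : {z : GaussianInt | z.norm = n}.Finite := by
  refine ((Set.finite_Icc (-n) n).prod (Set.finite_Icc (-n) n)).preimage
    (f := fun z : GaussianInt => (z.re, z.im)) (fun z _ w _ h => ?_) |>.subset fun z hz => ?_
  · simp only [Prod.mk.injEq] at h
    exact Zsqrtd.ext h.1 h.2
  · simp only [Set.mem_ofPred_eq] at hz
    exact ⟨abs_le.1 (hz ▸ abs_re_le_norm z), abs_le.1 (hz ▸ abs_im_le_norm z)⟩

noncomputable def normCount (n : ℕ) : ℕ := {z : GaussianInt | z.norm = n}.ncard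

theorem prime_of_prime_norm {π : GaussianInt} (h : Prime π.norm) : Prime π := by
  rw [← irreducible_iff_prime]
  refine ⟨fun hu => h.not_isUnit (Int.isUnit_iff_natAbs_eq.2 (Zsqrtd.norm_eq_one_iff.2 hu)),
    fun a b hab => ?_⟩
  rw [hab, Zsqrtd.norm_mul] at h
  exact (h.irreducible.isUnit_or_isUnit rfl).imp
    (fun ha => Zsqrtd.norm_eq_one_iff.1 (Int.isUnit_iff_natAbs_eq.1 ha))
    (fun hb => Zsqrtd.norm_eq_one_iff.1 (Int.isUnit_iff_natAbs_eq.1 hb))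

theorem not_dvd_natCast_of_dvd_norm {π : GaussianInt} {p m : ℕ} (hp : p.Prime)
    (hπ : (p : ℤ) ∣ π.norm) (hpm : ¬p ∣ m) : ¬π ∣ (m : GaussianInt) := by
  rintro ⟨c, hc⟩
  have hnorm := congrArg Zsqrtd.norm hc
  rw [Zsqrtd.norm_natCast, Zsqrtd.norm_mul] at hnorm
  have hpmm : p ∣ m * m :=
    Int.natCast_dvd_natCast.1 (by push_cast; exact hnorm ▸ hπ.mul_right c.norm)
  exact hpm ((hp.dvd_mul.1 hpmm).elim id id)

end GaussianInt

open GaussianInt in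
theorem r2_eq_normCount (d : ℕ) : r2 d = normCount d := by
  have hinj : Function.Injective fun p : ℤ × ℤ => (⟨p.1, p.2⟩ : GaussianInt) :=
    fun p q h => Prod.ext (congrArg Zsqrtd.re h :) (congrArg Zsqrtd.im h :)
  rw [r2, normCount, ← Set.ncard_coe_finset, ← Set.ncard_image_of_injective _ hinj]
  congr 1
  ext z
  simp only [Finset.coe_filter, Finset.mem_product, Finset.mem_Icc, Set.mem_image,
    Set.mem_ofPred_eq]
  constructor
  · rintro ⟨p, ⟨-, hp⟩, rfl⟩
    rwa [norm_eq_sq_add_sq]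
  · intro hz
    refine ⟨(z.re, z.im), ⟨⟨abs_le.1 ?_, abs_le.1 ?_⟩, ?_⟩, rfl⟩
    · exact hz ▸ abs_re_le_norm z
    · exact hz ▸ abs_im_le_norm z
    · rw [← hz, norm_eq_sq_add_sq]

namespace GaussianInt

theorem normCount_one : normCount 1 = 4 := by
  rw [← r2_eq_normCount]
  decide

theorem ne_zero_of_norm_eq_natCast {z : GaussianInt} {n : ℕ} (hz : z.norm = n) (hn : n ≠ 0) :
    z ≠ 0 := by
  rintro rfl
  exact hn (by simpa using hz.symm)

theorem multiplicity_norm {π z : GaussianInt} (hπ : Prime π) (hz : z ≠ 0) :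
    multiplicity π (z.norm : GaussianInt) = multiplicity π z + multiplicity (star π) z := by
  rw [Zsqrtd.norm_eq_mul_conj,
    multiplicity_mul hπ (.of_prime_left hπ (mul_ne_zero hz (star_ne_zero.2 hz))),
    ← multiplicity_star_star (star π) z, star_star]

theorem multiplicity_norm_of_associated_star {π z : GaussianInt} (hπ : Prime π)
    (hstar : Associated (star π) π) (hz : z ≠ 0) :
    multiplicity π (z.norm : GaussianInt) = 2 * multiplicity π z := by
  rw [multiplicity_norm hπ hz, multiplicity_eq_of_associated_left hstar, two_mul]

theorem ncard_setOf_norm_eq_mul_and_dvd {ρ : GaussianInt} (hρ : ρ ≠ 0) (n : ℤ) :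
    {z : GaussianInt | z.norm = ρ.norm * n ∧ ρ ∣ z}.ncard =
      {w : GaussianInt | w.norm = n}.ncard := by
  rw [← Set.ncard_image_of_injective {w | w.norm = n} (mul_right_injective₀ hρ)]
  congr 1
  ext z
  simp only [Set.mem_ofPred_eq, Set.mem_image]
  constructor
  · rintro ⟨hz, w, rfl⟩
    rw [Zsqrtd.norm_mul] at hz
    exact ⟨w, mul_left_cancel₀ (norm_eq_zero.not.2 hρ) hz, rfl⟩
  · rintro ⟨w, hw, rfl⟩
    exact ⟨by rw [Zsqrtd.norm_mul, hw], dvd_mul_right ρ w⟩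

theorem normCount_eq_zero_of_odd_multiplicity {π : GaussianInt} (hπ : Prime π)
    (hstar : Associated (star π) π) {n : ℕ} (hn : n ≠ 0)
    (hodd : Odd (multiplicity π (n : GaussianInt))) : normCount n = 0 := by
  suffices {z : GaussianInt | z.norm = n} = ∅ by rw [normCount, this, Set.ncard_empty]
  refine Set.eq_empty_of_forall_notMem fun z (hz : z.norm = n) => ?_
  have hz0 : z ≠ 0 := ne_zero_of_norm_eq_natCast hz hn
  have h := multiplicity_norm_of_associated_star hπ hstar hz0
  rw [hz, Int.cast_natCast] at h
  exact Nat.not_even_iff_odd.2 hodd (h ▸ even_two_mul _)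

theorem normCount_pow_mul_of_associated_star {π : GaussianInt} (hπ : Prime π)
    (hstar : Associated (star π) π) {t m : ℕ} (ht : π.norm = t)
    (hm : ¬π ∣ (m : GaussianInt)) (e : ℕ) : normCount (t ^ e * m) = normCount m := by
  have htπ : (t : GaussianInt) = (π.norm : GaussianInt) := by rw [ht, Int.cast_natCast]
  have ht0 : (t : GaussianInt) ≠ 0 := htπ ▸ Int.cast_ne_zero.2 (norm_eq_zero.not.2 hπ.ne_zero)
  have hdvd : ∀ z : GaussianInt, z.norm = (t ^ e * m : ℕ) → π ^ e ∣ z := by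
    intro z hz
    rcases eq_or_ne z 0 with rfl | hz0
    · exact dvd_zero _
    have h := multiplicity_norm_of_associated_star hπ hstar hz0
    rw [hz, Int.cast_natCast, Nat.cast_mul, Nat.cast_pow,
      multiplicity_pow_mul_of_not_dvd hπ ht0 hm, htπ,
      multiplicity_norm_of_associated_star hπ hstar hπ.ne_zero, multiplicity_self] at h
    exact pow_dvd_of_le_multiplicity (by omega)
  rw [normCount, normCount, ← ncard_setOf_norm_eq_mul_and_dvd (pow_ne_zero e hπ.ne_zero) m]
  congr 1
  ext z
  simp only [Set.mem_ofPred_eq, Zsqrtd.norm_pow, ht]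
  push_cast
  exact ⟨fun hz => ⟨hz, hdvd z (by exact_mod_cast hz)⟩, And.left⟩

theorem normCount_pow_mul_of_not_dvd_star {π : GaussianInt} (hπ : Prime π)
    (hstar : ¬π ∣ star π) {p m : ℕ} (hp : π.norm = p) (hm : ¬π ∣ (m : GaussianInt))
    (g : ℕ) :
    normCount (p ^ g * m) = (g + 1) * normCount m := by
  have hπ' : Prime (star π) :=
    (MulEquiv.prime_iff (starMulAut : GaussianInt ≃* GaussianInt)).2 hπ
  have hp0 : p ≠ 0 := by
    rintro rfl
    exact hπ.ne_zero (norm_eq_zero.1 hp)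
  have hm0 : m ≠ 0 := by
    rintro rfl
    exact hm (dvd_zero π)
  have hvp : multiplicity π (p : GaussianInt) = 1 := by
    have hconj := multiplicity_star_star π (star π)
    rw [star_star] at hconj
    rw [show (p : GaussianInt) = (π.norm : GaussianInt) by rw [hp, Int.cast_natCast],
      multiplicity_norm hπ hπ.ne_zero, multiplicity_self, hconj, multiplicity_eq_zero.2 hstar]
  induction g with
  | zero => simp
  | succ g ih =>
    set S := {z : GaussianInt | z.norm = (p ^ (g + 1) * m : ℕ)}
    have hsum : ∀ z ∈ S, multiplicity π z + multiplicity (star π) z = g + 1 := by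
      intro z (hz : z.norm = _)
      rw [← multiplicity_norm hπ (ne_zero_of_norm_eq_natCast hz (by positivity)), hz,
        Int.cast_natCast, Nat.cast_mul, Nat.cast_pow,
        multiplicity_pow_mul_of_not_dvd hπ (Nat.cast_ne_zero.2 hp0) hm, hvp, mul_one]
    have hsplit : ∀ z ∈ S, ¬π ∣ z ↔ star π ^ (g + 1) ∣ z := by
      intro z hz
      have hfin := FiniteMultiplicity.of_prime_left hπ'
        (ne_zero_of_norm_eq_natCast hz (by positivity))
      rw [← multiplicity_eq_zero, hfin.pow_dvd_iff_le_multiplicity]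
      have := hsum z hz
      omega
    calc normCount (p ^ (g + 1) * m)
        = (S ∩ {z | π ∣ z}).ncard + (S \ {z | π ∣ z}).ncard :=
          (Set.ncard_inter_add_ncard_sdiff_eq_ncard _ _ (finite_setOf_norm_eq _)).symm
      _ = {z : GaussianInt | z.norm = π.norm * (p ^ g * m : ℕ) ∧ π ∣ z}.ncard +
          {z : GaussianInt | z.norm = (star π ^ (g + 1)).norm * m ∧
            star π ^ (g + 1) ∣ z}.ncard := by
        congr 2
        · ext z
          simp only [S, Set.mem_inter_iff, Set.mem_ofPred_eq, hp]
          push_cast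
          ring_nf
        · ext z
          refine (and_congr_right (hsplit z)).trans ?_
          simp only [S, Set.mem_ofPred_eq, Zsqrtd.norm_pow, Zsqrtd.norm_conj, hp]
          push_cast
          rfl
      _ = (g + 1 + 1) * normCount m := by
        rw [ncard_setOf_norm_eq_mul_and_dvd hπ.ne_zero, ncard_setOf_norm_eq_mul_and_dvd
          (pow_ne_zero _ hπ'.ne_zero), ← normCount, ← normCount, ih]
        ring

theorem normCount_two_pow_mul {m : ℕ} (hm : ¬2 ∣ m) (k : ℕ) :
    normCount (2 ^ k * m) = normCount m := by
  have hnorm : (⟨1, 1⟩ : GaussianInt).norm = (2 : ℕ) := rfl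
  have hπ : Prime (⟨1, 1⟩ : GaussianInt) :=
    prime_of_prime_norm (hnorm ▸ Nat.prime_iff_prime_int.1 Nat.prime_two)
  have hstar : Associated (star ⟨1, 1⟩ : GaussianInt) ⟨1, 1⟩ :=
    ⟨⟨⟨0, 1⟩, ⟨0, -1⟩, by decide, by decide⟩, by decide⟩
  exact normCount_pow_mul_of_associated_star hπ hstar hnorm
    (not_dvd_natCast_of_dvd_norm Nat.prime_two hnorm.symm.dvd hm) k

theorem exists_norm_eq_and_not_dvd_star {p : ℕ} (hp : p.Prime) (hp1 : p % 4 = 1) :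
    ∃ π : GaussianInt, π.norm = p ∧ ¬π ∣ star π := by
  have := Fact.mk hp
  obtain ⟨a, b, hab⟩ := Nat.Prime.sq_add_sq (p := p) (by omega)
  have hnorm : (⟨a, b⟩ : GaussianInt).norm = p := by
    rw [norm_eq_sq_add_sq]
    change (a : ℤ) ^ 2 + (b : ℤ) ^ 2 = p
    exact_mod_cast hab
  refine ⟨⟨a, b⟩, hnorm, fun h => ?_⟩
  have ha : a ≠ 0 := by
    rintro rfl
    have hb : b ≠ 1 := by rintro rfl; simp at hab; exact hp.one_lt.ne hab
    exact Nat.not_prime_mul hb hb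
      (by rwa [← sq, ← zero_add (b ^ 2), ← zero_pow two_ne_zero, hab])
  have hsum : (⟨a, b⟩ : GaussianInt) + star ⟨a, b⟩ = ((2 * a : ℕ) : GaussianInt) := by
    ext <;> simp [two_mul]
  -- `π ∣ π + star π = 2 * a` gives `p ∣ 2 * a`, which is too much since `a ^ 2 < p`.
  have hpa : p ∣ 2 * a := by
    by_contra hpa
    exact not_dvd_natCast_of_dvd_norm hp hnorm.symm.dvd hpa (hsum ▸ dvd_add dvd_rfl h)
  have : p ≤ 4 := by nlinarith [Nat.le_of_dvd (by omega) hpa]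
  have := hp.two_le
  omega

theorem normCount_pow_mul_of_mod_four_eq_one {p m : ℕ} (hp : p.Prime) (hp1 : p % 4 = 1)
    (hpm : ¬p ∣ m) (k : ℕ) : normCount (p ^ k * m) = (k + 1) * normCount m := by
  obtain ⟨π, hnorm, hstar⟩ := exists_norm_eq_and_not_dvd_star hp hp1
  exact normCount_pow_mul_of_not_dvd_star
    (prime_of_prime_norm (hnorm ▸ Nat.prime_iff_prime_int.1 hp)) hstar hnorm
    (not_dvd_natCast_of_dvd_norm hp hnorm.symm.dvd hpm) k

theorem normCount_pow_mul_of_mod_four_eq_three {q m : ℕ} (hq : q.Prime) (hq3 : q % 4 = 3)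
    (hqm : ¬q ∣ m) (k : ℕ) : normCount (q ^ k * m) = if Even k then normCount m else 0 := by
  have := Fact.mk hq
  have hπ : Prime (q : GaussianInt) := (prime_iff_mod_four_eq_three_of_nat_prime q).2 hq3
  have hstar : Associated (star (q : GaussianInt)) q := by rw [star_natCast]
  have hnorm : (q : GaussianInt).norm = (q ^ 2 : ℕ) := by
    rw [Zsqrtd.norm_natCast]
    push_cast
    ring
  have hqm' : ¬(q : GaussianInt) ∣ m := not_dvd_natCast_of_dvd_norm hq (hnorm ▸ by simp) hqm
  split_ifs with hk
  · obtain ⟨e, rfl⟩ := hk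
    rw [← two_mul, pow_mul]
    exact normCount_pow_mul_of_associated_star hπ hstar hnorm hqm' e
  · have hm0 : m ≠ 0 := by
      rintro rfl
      exact hqm (dvd_zero q)
    refine normCount_eq_zero_of_odd_multiplicity hπ hstar
      (mul_ne_zero (pow_ne_zero k hq.ne_zero) hm0) ?_
    rwa [Nat.cast_mul, Nat.cast_pow, multiplicity_pow_mul_of_not_dvd hπ hπ.ne_zero hqm',
      multiplicity_self, mul_one, Nat.not_even_iff_odd.symm]

/-- `normCount (p ^ k) = 4 * normCountFactor p k` for every prime `p`. -/
def normCountFactor (p k : ℕ) : ℕ :=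
  if p % 4 = 1 then k + 1 else if p % 4 = 3 ∧ Odd k then 0 else 1

theorem normCount_prime_pow_mul {p m : ℕ} (hp : p.Prime) (hpm : ¬p ∣ m) (k : ℕ) :
    normCount (p ^ k * m) = normCountFactor p k * normCount m := by
  rcases hp.eq_two_or_odd' with rfl | hodd
  · simp [normCountFactor, normCount_two_pow_mul hpm]
  obtain hp1 | hp3 : p % 4 = 1 ∨ p % 4 = 3 := by have := Nat.odd_iff.1 hodd; omega
  · simp [normCountFactor, hp1, normCount_pow_mul_of_mod_four_eq_one hp hp1 hpm]
  · by_cases hk : Even k <;>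
      simp [normCountFactor, hp3, hk, normCount_pow_mul_of_mod_four_eq_three hp hp3 hpm]

theorem normCount_eq_four_mul_factorization_prod {d : ℕ} (hd : d ≠ 0) :
    normCount d = 4 * d.factorization.prod normCountFactor := by
  induction d using Nat.recOnPrimePow with
  | zero => exact absurd rfl hd
  | one => simp [normCount_one]
  | prime_pow_mul a p k hp hpa _ ih =>
    have ha : a ≠ 0 := by
      rintro rfl
      exact hpa (dvd_zero p)
    rw [normCount_prime_pow_mul hp hpa, ih ha,
      Nat.factorization_prod_pow_mul hp hpa k (by simp [normCountFactor]), mul_left_comm]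

end GaussianInt

theorem sum_two_squares_formula (d : ℕ) (hd : 0 < d) :
    ((∃ q : ℕ, q.Prime ∧ q % 4 = 3 ∧ Odd (d.factorization q)) → r2 d = 0) ∧
    ((∀ q : ℕ, q.Prime → q % 4 = 3 → Even (d.factorization q)) →
      r2 d = 4 * ∏ p ∈ d.primeFactors.filter (fun p => p % 4 = 1),
        (d.factorization p + 1)) := by
  rw [r2_eq_normCount, GaussianInt.normCount_eq_four_mul_factorization_prod hd.ne', Finsupp.prod,
    Nat.support_factorization]
  refine ⟨fun ⟨q, hq, hq3, hodd⟩ => ?_, fun heven => ?_⟩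
  · have hqd : q ∈ d.primeFactors :=
      Nat.mem_primeFactors.2 ⟨hq, Nat.dvd_of_factorization_pos hodd.pos.ne', hd.ne'⟩
    rw [Finset.prod_eq_zero hqd (by simp [GaussianInt.normCountFactor, hq3, hodd]), mul_zero]
  · rw [Finset.prod_filter]
    congr 1
    refine Finset.prod_congr rfl fun p hp => ?_
    have := heven p (Nat.prime_of_mem_primeFactors hp)
    by_cases hp1 : p % 4 = 1 <;> by_cases hp3 : p % 4 = 3 <;> simp_all [GaussianInt.normCountFactor]
end

section
/- For every prime number k, the smallest positive integer n with r₂(n) = 4k is n = 5^{k−1}; that is, n_k = 5^{k−1} whenever k is prime. -/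
open Finset

/-!
Count in the Gaussian integers: `r2 n` is the number of `z : ℤ[i]` of norm `n`, and the primes
`p ∤ t` can be split off one at a time. Since `1 + i` and an inert prime `q ≡ 3 (mod 4)` are
associated to their conjugates, `r₂(2^e t) = r₂(t)` and `r₂(q^e t)` is `r₂(t)` or `0` according
to the parity of `e`. A prime `p ≡ 1 (mod 4)` splits as `p = π π̄` with `π ∤ π̄`, and every `z`
of norm `p^e t` is uniquely `π^c π̄^d w` with `c + d = e` and `N w = t` (`c` is the `π`-adic
valuation of `z`), so `r₂(p^e t) = (e + 1) r₂(t)`. Starting from `r₂(1) = 4`, `r₂(n) = 4k` with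
`k` prime forces a single `p ≡ 1 (mod 4)` to occur with exponent `k - 1`, so
`n ≥ p^(k-1) ≥ 5^(k-1)`, while `r₂(5^(k-1)) = 4k`.
-/

open Zsqrtd

local notation "ℤ[i]" => GaussianInt

namespace Zsqrtd

variable {d : ℤ} {π z : ℤ√d}

instance isLocalHom_normMonoidHom : IsLocalHom (normMonoidHom (d := d)) :=
  ⟨fun z hz => (isUnit_iff_norm_isUnit z).mpr hz⟩

theorem norm_pow_s7 (z : ℤ√d) (n : ℕ) : (z ^ n).norm = z.norm ^ n :=
  map_pow normMonoidHom z n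

theorem dvd_intCast_norm (π : ℤ√d) : π ∣ (π.norm : ℤ√d) := by
  rw [norm_eq_mul_conj]
  exact dvd_mul_right _ _

theorem dvd_or_star_dvd_of_dvd_norm (hπ : Prime π) (h : π ∣ (z.norm : ℤ√d)) :
    π ∣ z ∨ star π ∣ z := by
  rw [norm_eq_mul_conj] at h
  exact (hπ.dvd_or_dvd h).imp_right fun h' => by
    simpa [starRingEnd_apply] using map_dvd (starRingEnd (ℤ√d)) h'

theorem dvd_of_dvd_norm_of_dvd_star (hπ : Prime π) (hconj : π ∣ star π)
    (h : π ∣ (z.norm : ℤ√d)) : π ∣ z :=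
  (dvd_or_star_dvd_of_dvd_norm hπ h).elim id hconj.trans

end Zsqrtd

namespace GaussianInt

variable {π : ℤ[i]}

theorem prime_of_norm_eq_prime {p : ℕ} (hp : p.Prime) (hπ : π.norm = p) : Prime π := by
  refine (Irreducible.of_map (f := normMonoidHom (d := -1)) ?_).prime
  change Irreducible π.norm
  exact hπ ▸ (Nat.prime_iff_prime_int.mp hp).irreducible

/-- If `π ∣ π̄`, then `π` divides `π + π̄ = 2 re π` and `-i (π - π̄) = 2 im π`; taking norms,
the odd prime `p` divides `re π` and `im π`, so `p²` divides their sum of squares `p`. -/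
theorem not_dvd_star_of_norm_eq_prime {p : ℕ} (hp : p.Prime) (hp2 : p ≠ 2) (hπ : π.norm = p) :
    ¬π ∣ star π := by
  intro h
  have hpZ : Prime (p : ℤ) := Nat.prime_iff_prime_int.mp hp
  have hdvd_of_dvd_two_mul : ∀ n : ℤ, π ∣ ((2 * n : ℤ) : ℤ[i]) → (p : ℤ) ∣ n := by
    intro n hn
    have h2n : (p : ℤ) ∣ 2 * n * (2 * n) := by
      have := map_dvd (normMonoidHom (d := -1)) hn
      change π.norm ∣ ((2 * n : ℤ) : ℤ[i]).norm at this
      rwa [hπ, Zsqrtd.norm_intCast] at this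
    rcases hpZ.dvd_or_dvd ((hpZ.dvd_or_dvd h2n).elim id id) with h2 | h
    · exact absurd ((Nat.prime_dvd_prime_iff_eq hp Nat.prime_two).mp (by exact_mod_cast h2)) hp2
    · exact h
  have hre := hdvd_of_dvd_two_mul π.re (by
    convert dvd_add (dvd_refl π) h using 1
    ext <;> simp [two_mul])
  have him := hdvd_of_dvd_two_mul π.im (by
    convert (dvd_sub (dvd_refl π) h).mul_right ⟨0, -1⟩ using 1
    ext <;> simp [two_mul])
  have hsq : (p : ℤ) * p ∣ π.re * π.re + π.im * π.im :=
    dvd_add (mul_dvd_mul hre hre) (mul_dvd_mul him him)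
  rw [show π.re * π.re + π.im * π.im = p * 1 by rw [← hπ, Zsqrtd.norm_def]; ring] at hsq
  exact hpZ.not_isUnit (isUnit_of_dvd_one ((mul_dvd_mul_iff_left hpZ.ne_zero).mp hsq))

theorem norm_eq_of_norm_mul_eq (hπ : π ≠ 0) {w : ℤ[i]} {t : ℤ} (h : (π * w).norm = π.norm * t) :
    w.norm = t := by
  rw [Zsqrtd.norm_mul] at h
  exact mul_left_cancel₀ (by simpa using hπ) h

theorem setOf_norm_eq_norm_mul (hπ : Prime π) (hconj : π ∣ star π) (t : ℤ) :
    {z : ℤ[i] | z.norm = π.norm * t} = (π * ·) '' {w | w.norm = t} := by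
  ext z
  constructor
  · intro hz
    have hdvd : π ∣ (z.norm : ℤ[i]) := by
      rw [Set.mem_ofPred_eq.mp hz, Int.cast_mul]
      exact (dvd_intCast_norm π).mul_right _
    obtain ⟨w, rfl⟩ := dvd_of_dvd_norm_of_dvd_star hπ hconj hdvd
    exact ⟨w, norm_eq_of_norm_mul_eq hπ.ne_zero hz, rfl⟩
  · rintro ⟨w, hw, rfl⟩
    simp only [Set.mem_ofPred_eq] at hw ⊢
    rw [Zsqrtd.norm_mul, hw]

theorem ncard_norm_eq_pow_mul_of_dvd_star (hπ : Prime π) (hconj : π ∣ star π) (m : ℕ) (t : ℤ) :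
    {z : ℤ[i] | z.norm = π.norm ^ m * t}.ncard = {z : ℤ[i] | z.norm = t}.ncard := by
  induction m with
  | zero => simp
  | succ m ih =>
    rw [pow_succ', mul_assoc, setOf_norm_eq_norm_mul hπ hconj,
      Set.ncard_image_of_injective _ (mul_right_injective₀ hπ.ne_zero), ih]

theorem setOf_norm_eq_natCast_mul_eq_empty {q : ℕ} [Fact q.Prime] (hq3 : q % 4 = 3) {t : ℤ}
    (ht : ¬(q : ℤ) ∣ t) : {z : ℤ[i] | z.norm = q * t} = ∅ := by
  refine Set.eq_empty_of_forall_notMem fun z hz => ht ?_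
  have hdvd : (q : ℤ[i]) ∣ (z.norm : ℤ[i]) := by
    rw [Set.mem_ofPred_eq.mp hz]
    exact ⟨t, by push_cast; rfl⟩
  obtain ⟨w, rfl⟩ := dvd_of_dvd_norm_of_dvd_star (prime_of_nat_prime_of_mod_four_eq_three q hq3)
    (by rw [star_natCast]) hdvd
  rw [Set.mem_ofPred_eq, Zsqrtd.norm_mul, Zsqrtd.norm_natCast, mul_assoc] at hz
  exact ⟨w.norm, (mul_left_cancel₀ (by exact_mod_cast (Fact.out : q.Prime).ne_zero) hz).symm⟩

theorem exists_eq_pow_mul_star_pow_mul (hπ : Prime π) {t : ℤ} :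
    ∀ {a : ℕ} {z : ℤ[i]}, z.norm = π.norm ^ a * t →
      ∃ c d w, c + d = a ∧ w.norm = t ∧ π ^ c * star π ^ d * w = z
  | 0, z, hz => ⟨0, 0, z, rfl, by simpa using hz, by simp⟩
  | a + 1, z, hz => by
    have hdvd : π ∣ (z.norm : ℤ[i]) := by
      rw [hz, pow_succ', mul_assoc, Int.cast_mul]
      exact (dvd_intCast_norm π).mul_right _
    rcases dvd_or_star_dvd_of_dvd_norm hπ hdvd with ⟨u, rfl⟩ | ⟨u, rfl⟩
    · rw [pow_succ', mul_assoc] at hz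
      obtain ⟨c, d, w, hcd, hw, rfl⟩ :=
        exists_eq_pow_mul_star_pow_mul hπ (norm_eq_of_norm_mul_eq hπ.ne_zero hz)
      exact ⟨c + 1, d, w, by omega, hw, by ring⟩
    · rw [pow_succ', mul_assoc, ← Zsqrtd.norm_conj π] at hz
      obtain ⟨c, d, w, hcd, hw, rfl⟩ := exists_eq_pow_mul_star_pow_mul hπ
        (norm_eq_of_norm_mul_eq (star_ne_zero.mpr hπ.ne_zero) (by rwa [Zsqrtd.norm_conj] at hz ⊢))
      exact ⟨c, d + 1, w, by omega, hw, by ring⟩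

theorem setOf_norm_eq_pow_mul (hπ : Prime π) (a : ℕ) (t : ℤ) :
    {z : ℤ[i] | z.norm = π.norm ^ a * t} =
      (fun x : (ℕ × ℕ) × ℤ[i] => π ^ x.1.1 * star π ^ x.1.2 * x.2) ''
        ((antidiagonal a : Set (ℕ × ℕ)) ×ˢ {w | w.norm = t}) := by
  ext z
  constructor
  · intro hz
    obtain ⟨c, d, w, hcd, hw, rfl⟩ := exists_eq_pow_mul_star_pow_mul hπ hz
    exact ⟨((c, d), w), ⟨by simpa using hcd, hw⟩, rfl⟩
  · rintro ⟨⟨⟨c, d⟩, w⟩, ⟨hcd, hw⟩, rfl⟩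
    rw [Finset.mem_coe, HasAntidiagonal.mem_antidiagonal] at hcd
    simp only [Set.mem_ofPred_eq] at hw ⊢
    rw [Zsqrtd.norm_mul, Zsqrtd.norm_mul, Zsqrtd.norm_pow_s7, Zsqrtd.norm_pow_s7, Zsqrtd.norm_conj, hw,
      ← hcd, pow_add]

theorem emultiplicity_pow_mul_star_pow_mul (hπ : Prime π) (hπ' : ¬π ∣ star π) {w : ℤ[i]}
    (hw : ¬π ∣ w) (c d : ℕ) : emultiplicity π (π ^ c * star π ^ d * w) = c := by
  rw [emultiplicity_mul hπ, emultiplicity_mul hπ, emultiplicity_pow_self_of_prime hπ,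
    emultiplicity_pow hπ, emultiplicity_eq_zero.mpr hπ', emultiplicity_eq_zero.mpr hw]
  simp

theorem ncard_norm_eq_pow_mul (hπ : Prime π) (hπ' : ¬π ∣ star π) (a : ℕ) {t : ℤ}
    (ht : ¬π.norm ∣ t) :
    {z : ℤ[i] | z.norm = π.norm ^ a * t}.ncard = (a + 1) * {z : ℤ[i] | z.norm = t}.ncard := by
  rw [setOf_norm_eq_pow_mul hπ, Set.InjOn.ncard_image, Set.ncard_prod, Set.ncard_coe_finset,
    Finset.Nat.card_antidiagonal]
  have hndvd : ∀ w : ℤ[i], w.norm = t → ¬π ∣ w := fun w hw hdvd =>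
    ht (hw ▸ map_dvd normMonoidHom hdvd)
  rintro ⟨⟨c, d⟩, w⟩ ⟨hcd, hw⟩ ⟨⟨c', d'⟩, w'⟩ ⟨hcd', hw'⟩ h
  rw [Finset.mem_coe, HasAntidiagonal.mem_antidiagonal] at hcd hcd'
  dsimp only at hcd hcd' hw hw' h
  have hc : c = c' := by
    simpa [emultiplicity_pow_mul_star_pow_mul hπ hπ' (hndvd w hw),
      emultiplicity_pow_mul_star_pow_mul hπ hπ' (hndvd w' hw')] using
      congrArg (emultiplicity π) h
  obtain ⟨rfl, rfl⟩ : c = c' ∧ d = d' := ⟨hc, by omega⟩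
  have hne : π ^ c * star π ^ d ≠ 0 := by simp [hπ.ne_zero]
  rw [mul_left_cancel₀ hne h]

end GaussianInt

open GaussianInt

theorem r2_eq_ncard (n : ℕ) : r2 n = {z : ℤ[i] | z.norm = n}.ncard := by
  have hset : {z : ℤ[i] | z.norm = n} = (fun x : ℤ × ℤ => (⟨x.1, x.2⟩ : ℤ[i])) ''
      ↑((Icc (-(n : ℤ)) n ×ˢ Icc (-(n : ℤ)) n).filter (fun x => x.1 ^ 2 + x.2 ^ 2 = (n : ℤ))) := by
    ext z
    simp only [Set.mem_ofPred_eq, Set.mem_image, Finset.coe_filter, Finset.mem_product,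
      Finset.mem_Icc, Zsqrtd.norm_def]
    constructor
    · intro hz
      refine ⟨(z.re, z.im), ⟨⟨⟨?_, ?_⟩, ?_, ?_⟩, by linear_combination hz⟩, rfl⟩ <;>
        nlinarith [sq_nonneg (z.re + 1), sq_nonneg (z.re - 1), sq_nonneg (z.im + 1),
          sq_nonneg (z.im - 1)]
    · rintro ⟨x, ⟨-, hx⟩, rfl⟩
      dsimp only
      linear_combination hx
  have hinj : Function.Injective fun x : ℤ × ℤ => (⟨x.1, x.2⟩ : ℤ[i]) := fun x y h => by
    simpa [Zsqrtd.ext_iff, Prod.ext_iff] using h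
  rw [hset, Set.ncard_image_of_injective _ hinj, Set.ncard_coe_finset, r2]

theorem r2_one : r2 1 = 4 := by decide

theorem r2_two_pow_mul (e t : ℕ) : r2 (2 ^ e * t) = r2 t := by
  have hnorm : (⟨1, 1⟩ : ℤ[i]).norm = 2 := by decide
  have hπ : Prime (⟨1, 1⟩ : ℤ[i]) := prime_of_norm_eq_prime Nat.prime_two hnorm
  have hconj : (⟨1, 1⟩ : ℤ[i]) ∣ star ⟨1, 1⟩ := ⟨⟨0, -1⟩, by decide⟩
  rw [r2_eq_ncard, r2_eq_ncard, Nat.cast_mul, Nat.cast_pow, Nat.cast_ofNat, ← hnorm,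
    ncard_norm_eq_pow_mul_of_dvd_star hπ hconj]

theorem r2_pow_mul_of_mod_four_eq_three {q t : ℕ} (hq : q.Prime) (hq3 : q % 4 = 3) (ht : ¬q ∣ t)
    (e : ℕ) : r2 (q ^ e * t) = if Even e then r2 t else 0 := by
  have := Fact.mk hq
  have hπ : Prime (q : ℤ[i]) := prime_of_nat_prime_of_mod_four_eq_three q hq3
  have hconj : (q : ℤ[i]) ∣ star (q : ℤ[i]) := by rw [star_natCast]
  have hnorm : (q : ℤ[i]).norm = q ^ 2 := by rw [Zsqrtd.norm_natCast, sq]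
  obtain ⟨m, rfl | rfl⟩ := Nat.even_or_odd' e
  · rw [if_pos (even_two_mul m), r2_eq_ncard, r2_eq_ncard,
      show ((q ^ (2 * m) * t : ℕ) : ℤ) = (q : ℤ[i]).norm ^ m * t by rw [hnorm]; push_cast; ring,
      ncard_norm_eq_pow_mul_of_dvd_star hπ hconj]
  · rw [if_neg (Nat.not_even_iff_odd.mpr (odd_two_mul_add_one m)), r2_eq_ncard,
      show ((q ^ (2 * m + 1) * t : ℕ) : ℤ) = (q : ℤ[i]).norm ^ m * (q * t) by
        rw [hnorm]; push_cast; ring,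
      ncard_norm_eq_pow_mul_of_dvd_star hπ hconj m,
      setOf_norm_eq_natCast_mul_eq_empty hq3 (by exact_mod_cast ht), Set.ncard_empty]

theorem r2_pow_mul_of_mod_four_eq_one {p t : ℕ} (hp : p.Prime) (hp1 : p % 4 = 1) (ht : ¬p ∣ t)
    (e : ℕ) : r2 (p ^ e * t) = (e + 1) * r2 t := by
  have := Fact.mk hp
  obtain ⟨a, b, hab⟩ := Nat.Prime.sq_add_sq (p := p) (by omega)
  have hnorm : (⟨a, b⟩ : ℤ[i]).norm = p := by
    rw [Zsqrtd.norm_def, ← hab]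
    push_cast
    ring
  rw [r2_eq_ncard, r2_eq_ncard, Nat.cast_mul, Nat.cast_pow, ← hnorm,
    ncard_norm_eq_pow_mul (prime_of_norm_eq_prime hp hnorm)
      (not_dvd_star_of_norm_eq_prime hp (by omega) hnorm) e
      (by rwa [hnorm, Int.natCast_dvd_natCast])]

theorem r2_prime_pow_mul_cases {p t : ℕ} (hp : p.Prime) (ht : ¬p ∣ t) (e : ℕ) :
    r2 (p ^ e * t) = r2 t ∨ r2 (p ^ e * t) = 0 ∨
      p % 4 = 1 ∧ r2 (p ^ e * t) = (e + 1) * r2 t := by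
  rcases hp.eq_two_or_odd' with rfl | hodd
  · exact Or.inl (r2_two_pow_mul e t)
  rcases Nat.odd_mod_four_iff.mp (Nat.odd_iff.mp hodd) with h1 | h3
  · exact Or.inr (Or.inr ⟨h1, r2_pow_mul_of_mod_four_eq_one hp h1 ht e⟩)
  · rw [r2_pow_mul_of_mod_four_eq_three hp h3 ht e]
    split_ifs <;> simp

theorem four_dvd_r2 {n : ℕ} (hn : 0 < n) : 4 ∣ r2 n := by
  induction n using Nat.recOnPrimePow with
  | zero => omega
  | one => rw [r2_one]
  | prime_pow_mul t p e hp ht _ ih =>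
    have ih := ih (Nat.pos_of_mul_pos_left hn)
    rcases r2_prime_pow_mul_cases hp ht e with h | h | ⟨-, h⟩ <;> rw [h]
    exacts [ih, dvd_zero 4, ih.mul_left _]

theorem exists_prime_pow_dvd_of_r2_eq {n k : ℕ} (hn : 0 < n) (hk : k.Prime) (h : r2 n = 4 * k) :
    ∃ p, p.Prime ∧ p % 4 = 1 ∧ p ^ (k - 1) ∣ n := by
  induction n using Nat.recOnPrimePow with
  | zero => omega
  | one => exact absurd (by rw [r2_one] at h; omega : k = 1) hk.ne_one
  | prime_pow_mul t p e hp ht he ih =>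
    have ht0 := Nat.pos_of_mul_pos_left hn
    rcases r2_prime_pow_mul_cases hp ht e with h' | h' | ⟨hp1, h'⟩
    · obtain ⟨q, hq, hq1, hdvd⟩ := ih ht0 (h' ▸ h)
      exact ⟨q, hq, hq1, hdvd.mul_left _⟩
    · exact absurd (by omega : k = 0) hk.ne_zero
    · obtain ⟨s, hs⟩ := four_dvd_r2 ht0
      have hk' : (e + 1) * s = k := by rw [h', hs] at h; linarith
      rcases Nat.prime_mul_iff.mp (hk' ▸ hk) with ⟨-, rfl⟩ | ⟨-, he'⟩
      · refine ⟨p, hp, hp1, ?_⟩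
        rw [← hk', mul_one, Nat.add_sub_cancel]
        exact dvd_mul_right _ _
      · omega

theorem r2_five_pow (m : ℕ) : r2 (5 ^ m) = 4 * (m + 1) := by
  simpa [r2_one, mul_comm] using
    r2_pow_mul_of_mod_four_eq_one (t := 1) Nat.prime_five (by norm_num) (by norm_num) m

theorem nk_prime (k : ℕ) (hk : k.Prime) :
    r2 (5 ^ (k - 1)) = 4 * k ∧ nk k = 5 ^ (k - 1) := by
  have hr : r2 (5 ^ (k - 1)) = 4 * k := by rw [r2_five_pow, Nat.sub_add_cancel hk.one_le]
  refine ⟨hr, le_antisymm (Nat.sInf_le ⟨by positivity, hr⟩) (le_csInf ⟨_, by positivity, hr⟩ ?_)⟩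
  rintro n ⟨hn, hrn⟩
  obtain ⟨p, hp, hp1, hdvd⟩ := exists_prime_pow_dvd_of_r2_eq hn hk hrn
  calc 5 ^ (k - 1) ≤ p ^ (k - 1) := Nat.pow_le_pow_left (by have := hp.two_le; omega) _
    _ ≤ n := Nat.le_of_dvd hn hdvd
end

section
/- Let N ≥ 3 be an odd integer, set m = (N−1)/2, and let S = {0, m, 2m} × {0, m, 2m} ⊆ L_N be the 3×3 lattice stretched to the size of L_N. Then for every pair of integers (a,b) with 0 ≤ b ≤ a ≤ N−1 and (a,b) ≠ (0,0), one has S_{a,b} > 0 if and only if m divides both a and b. -/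
open Finset

/-- The N×N integer lattice `{(x,y) : 0 ≤ x ≤ N−1, 0 ≤ y ≤ N−1}`. -/
noncomputable def latticeN (N : ℕ) : Finset (ℤ × ℤ) :=
  Finset.Icc (0 : ℤ) ((N : ℤ) - 1) ×ˢ Finset.Icc (0 : ℤ) ((N : ℤ) - 1)

/-- The number of unordered pairs of distinct points of `S` whose squared
Euclidean distance is `d` (so the distance is `√d`). -/
def distCount (S : Finset (ℤ × ℤ)) (d : ℤ) : ℕ :=
  ((S ×ˢ S).filter (fun p => p.1 ≠ p.2 ∧
    (p.1.1 - p.2.1) ^ 2 + (p.1.2 - p.2.2) ^ 2 = d)).card / 2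

/-- The number of unordered pairs of distinct points of `S` with
coordinate-difference pattern `{|x₁−x₂|, |y₁−y₂|} = {a, b}`. -/
def pairCount (S : Finset (ℤ × ℤ)) (a b : ℤ) : ℕ :=
  ((S ×ˢ S).filter (fun p => p.1 ≠ p.2 ∧
    ((|p.1.1 - p.2.1| = a ∧ |p.1.2 - p.2.2| = b) ∨
     (|p.1.1 - p.2.1| = b ∧ |p.1.2 - p.2.2| = a)))).card / 2

/-- `D_N`: the set of (squared) distances `d` such that `√d` occurs between
two (distinct) points of the N×N lattice. -/
noncomputable def distSet (N : ℕ) : Finset ℤ :=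
  ((latticeN N ×ˢ latticeN N).filter (fun p => p.1 ≠ p.2)).image
    (fun p => (p.1.1 - p.2.1) ^ 2 + (p.1.2 - p.2.2) ^ 2)

/- The ordered pairs counted by `pairCount` come in swapped couples `(p, q)`, `(q, p)`,
so halving their number leaves a positive count as soon as there is one of them. -/
theorem pairCount_pos_iff (S : Finset (ℤ × ℤ)) (a b : ℤ) :
    0 < pairCount S a b ↔ ∃ p ∈ S, ∃ q ∈ S, p ≠ q ∧
      ((|p.1 - q.1| = a ∧ |p.2 - q.2| = b) ∨ (|p.1 - q.1| = b ∧ |p.2 - q.2| = a)) := by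
  unfold pairCount
  rw [Nat.div_pos_iff]
  simp only [two_pos, true_and]
  constructor
  · intro hcard
    obtain ⟨⟨p, q⟩, hpq⟩ := card_pos.mp (zero_lt_two.trans_le hcard)
    simp only [mem_filter, mem_product] at hpq
    exact ⟨p, hpq.1.1, q, hpq.1.2, hpq.2⟩
  · rintro ⟨p, hp, q, hq, hne, hpat⟩
    refine one_lt_card.mpr ⟨(p, q), ?_, (q, p), ?_, fun h => hne (Prod.ext_iff.mp h).1⟩
    · exact mem_filter.mpr ⟨mem_product.mpr ⟨hp, hq⟩, hne, hpat⟩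
    · refine mem_filter.mpr ⟨mem_product.mpr ⟨hq, hp⟩, hne.symm, ?_⟩
      rwa [abs_sub_comm q.1, abs_sub_comm q.2]

theorem dvd_of_mem_stretched {m u : ℤ} (hu : u ∈ ({0, m, 2 * m} : Finset ℤ)) : m ∣ u := by
  simp only [mem_insert, mem_singleton] at hu
  rcases hu with rfl | rfl | rfl <;> simp

theorem dvd_abs_sub_of_mem_stretched {m u v : ℤ} (hu : u ∈ ({0, m, 2 * m} : Finset ℤ))
    (hv : v ∈ ({0, m, 2 * m} : Finset ℤ)) : m ∣ |u - v| :=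
  (dvd_abs _ _).mpr (dvd_sub (dvd_of_mem_stretched hu) (dvd_of_mem_stretched hv))

theorem mem_stretched_of_dvd {m c : ℤ} (hc₀ : 0 ≤ c) (hc₂ : c ≤ 2 * m) (hmc : m ∣ c) :
    c ∈ ({0, m, 2 * m} : Finset ℤ) := by
  obtain ⟨j, rfl⟩ := hmc
  simp only [mem_insert, mem_singleton]
  rcases (show 0 ≤ m by omega).eq_or_lt with rfl | hm
  · simp
  have hj₀ : 0 ≤ j := nonneg_of_mul_nonneg_right hc₀ hm
  have hj₂ : j ≤ 2 := le_of_mul_le_mul_left (hc₂.trans_eq (mul_comm 2 m)) hm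
  interval_cases j <;> simp [mul_comm]

theorem stretched_three_by_three_general (N : ℕ)
    (m : ℤ) (hm : (N : ℤ) - 1 = 2 * m)
    (S : Finset (ℤ × ℤ))
    (hS : S = ({0, m, 2 * m} : Finset ℤ) ×ˢ ({0, m, 2 * m} : Finset ℤ)) :
    ∀ a b : ℤ, 0 ≤ b → b ≤ a → a ≤ (N : ℤ) - 1 → (a, b) ≠ (0, 0) →
      (0 < pairCount S a b ↔ m ∣ a ∧ m ∣ b) := by
  intro a b hb hba ha hne
  subst hS
  rw [pairCount_pos_iff]
  constructor
  · rintro ⟨p, hp, q, hq, -, hpat⟩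
    rw [mem_product] at hp hq
    have hx := dvd_abs_sub_of_mem_stretched hp.1 hq.1
    have hy := dvd_abs_sub_of_mem_stretched hp.2 hq.2
    rcases hpat with ⟨rfl, rfl⟩ | ⟨rfl, rfl⟩
    exacts [⟨hx, hy⟩, ⟨hy, hx⟩]
  · rintro ⟨hma, hmb⟩
    refine ⟨(a, b), mem_product.mpr ⟨?_, ?_⟩, (0, 0), by simp, hne, Or.inl ?_⟩
    · exact mem_stretched_of_dvd (hb.trans hba) (by omega) hma
    · exact mem_stretched_of_dvd hb (by omega) hmb
    · simp [abs_of_nonneg hb, abs_of_nonneg (hb.trans hba)]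

theorem stretched_three_by_three (N : ℕ) (hN : 3 ≤ N) (hodd : Odd N)
    (m : ℤ) (hm : (N : ℤ) - 1 = 2 * m)
    (S : Finset (ℤ × ℤ))
    (hS : S = ({0, m, 2 * m} : Finset ℤ) ×ˢ ({0, m, 2 * m} : Finset ℤ)) :
    ∀ a b : ℤ, 0 ≤ b → b ≤ a → a ≤ (N : ℤ) - 1 → (a, b) ≠ (0, 0) →
      (0 < pairCount S a b ↔ m ∣ a ∧ m ∣ b) :=
  stretched_three_by_three_general N m hm S hS
end

section
/- Let N ≥ 2 and p ≥ 2 be integers, let F_N = max_{d ∈ D_N} L_{√d} denote the highest distance frequency on the N×N lattice, and suppose N⁴/p² > 2·F_N. Then for every subset S ⊆ L_N with |S| = p, the total error satisfies Σ_{d ∈ D_N} |(N⁴/p²)·S_{√d} − L_{√d}| > Σ_{d ∈ D_N} L_{√d} = C(N², 2); that is, the (unnormalized) error of S strictly exceeds that of the empty subset. -/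
open Finset

/-! Every `S ⊆ L_N` has exactly `C(|S|, 2)` pairs of distinct points, each at a distance in `D_N`,
so `∑_{d ∈ D_N} S_{√d} = C(|S|, 2)`; for `|S| = p ≥ 2` some `S_{√d}` is positive. With
`c = N⁴/p²` and `L_{√d} ≤ F < c/2`, a term with `S_{√d} = 0` contributes `L_{√d}` to the error,
and a term with `S_{√d} ≥ 1` contributes `c·S_{√d} − L_{√d} > 2F − L_{√d} ≥ L_{√d}`. -/

theorem two_dvd_card_of_involution {α : Type*} (t : Finset α) (g : α → α)
    (hg_mem : ∀ a ∈ t, g a ∈ t) (hg_ne : ∀ a ∈ t, g a ≠ a)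
    (hg_invol : ∀ a ∈ t, g (g a) = a) :
    2 ∣ #t := by
  have h : ∑ _a ∈ t, (1 : ZMod 2) = 0 :=
    sum_involution (fun a _ => g a) (fun _ _ => by decide) (fun a ha _ => hg_ne a ha)
      hg_mem hg_invol
  simpa [ZMod.natCast_eq_zero_iff] using h

theorem two_dvd_card_filter_offDiag {α β : Type*} [DecidableEq α] (s : Finset α)
    (f : α × α → β) (hf : ∀ x, f x.swap = f x) (b : β) [DecidablePred (f · = b)] :
    2 ∣ #{x ∈ s.offDiag | f x = b} :=
  two_dvd_card_of_involution _ Prod.swap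
    (fun x hx => by
      simp only [mem_filter, mem_offDiag] at hx ⊢
      exact ⟨⟨hx.1.2.1, hx.1.1, hx.1.2.2.symm⟩, (hf x).trans hx.2⟩)
    (fun x hx h => (mem_offDiag.mp (mem_filter.mp hx).1).2.2 (congrArg Prod.snd h))
    (fun x _ => x.swap_swap)

def sqDist (x : (ℤ × ℤ) × (ℤ × ℤ)) : ℤ :=
  (x.1.1 - x.2.1) ^ 2 + (x.1.2 - x.2.2) ^ 2

theorem sqDist_swap (x : (ℤ × ℤ) × (ℤ × ℤ)) : sqDist x.swap = sqDist x := by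
  simp only [sqDist, Prod.fst_swap, Prod.snd_swap]
  ring

theorem two_mul_distCount (S : Finset (ℤ × ℤ)) (d : ℤ) :
    2 * distCount S d = #{x ∈ S.offDiag | sqDist x = d} := by
  have hfilter : {p ∈ S ×ˢ S | p.1 ≠ p.2 ∧ (p.1.1 - p.2.1) ^ 2 + (p.1.2 - p.2.2) ^ 2 = d}
      = {x ∈ S.offDiag | sqDist x = d} := by
    ext x
    simp only [mem_filter, mem_product, mem_offDiag, and_assoc]
    rfl
  rw [distCount, hfilter]
  exact Nat.mul_div_cancel' (two_dvd_card_filter_offDiag S sqDist sqDist_swap d)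

theorem sqDist_mem_distSet {N : ℕ} {S : Finset (ℤ × ℤ)} (hS : S ⊆ latticeN N)
    {x : (ℤ × ℤ) × (ℤ × ℤ)} (hx : x ∈ S.offDiag) : sqDist x ∈ distSet N := by
  rw [mem_offDiag] at hx
  exact mem_image_of_mem _ (mem_filter.mpr ⟨mem_product.mpr ⟨hS hx.1, hS hx.2.1⟩, hx.2.2⟩)

theorem sum_distCount_of_subset {N : ℕ} {S : Finset (ℤ × ℤ)} (hS : S ⊆ latticeN N) :
    ∑ d ∈ distSet N, distCount S d = (#S).choose 2 := by
  apply Nat.eq_of_mul_eq_mul_left two_pos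
  calc 2 * ∑ d ∈ distSet N, distCount S d
      = ∑ d ∈ distSet N, #{x ∈ S.offDiag | sqDist x = d} := by
        simp only [mul_sum, two_mul_distCount]
    _ = #S.offDiag := (card_eq_sum_card_fiberwise fun _ hx => sqDist_mem_distSet hS hx).symm
    _ = 2 * (#S).choose 2 := by
        rw [← Sym2.card_image_offDiag, Sym2.two_mul_card_image_offDiag]

theorem card_latticeN (N : ℕ) : #(latticeN N) = N ^ 2 := by
  simp [latticeN, card_product, sq]

section ErrorTerm

variable {K : Type*} [Field K] [LinearOrder K] [IsStrictOrderedRing K] {c L F : K}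

theorem le_abs_mul_natCast_sub (hL : 0 ≤ L) (hLF : L ≤ F) (hc : 2 * F < c) (n : ℕ) :
    L ≤ |c * n - L| := by
  rcases n.eq_zero_or_pos with rfl | hn
  · simp [abs_of_nonneg hL]
  · have hcn : c ≤ c * n := le_mul_of_one_le_right (by linarith) (by exact_mod_cast hn)
    exact le_abs.mpr (Or.inl (by linarith))

theorem lt_abs_mul_natCast_sub (hL : 0 ≤ L) (hLF : L ≤ F) (hc : 2 * F < c) {n : ℕ}
    (hn : 0 < n) : L < |c * n - L| := by
  have hcn : c ≤ c * n := le_mul_of_one_le_right (by linarith) (by exact_mod_cast hn)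
  exact lt_abs.mpr (Or.inl (by linarith))

end ErrorTerm

theorem small_subset_error_lower_bound_general (N p : ℕ) (hp : 2 ≤ p)
    (F : ℕ) (hF : F = (distSet N).sup (fun d => distCount (latticeN N) d))
    (hbig : 2 * (F : ℚ) < (N : ℚ) ^ 4 / (p : ℚ) ^ 2) :
    (∑ d ∈ distSet N, distCount (latticeN N) d = (N ^ 2).choose 2) ∧
    ∀ S : Finset (ℤ × ℤ), S ⊆ latticeN N → S.card = p →
      (∑ d ∈ distSet N, (distCount (latticeN N) d : ℚ)) <
        ∑ d ∈ distSet N,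
          |((N : ℚ) ^ 4 / (p : ℚ) ^ 2) * (distCount S d : ℚ) -
            (distCount (latticeN N) d : ℚ)| := by
  refine ⟨by rw [sum_distCount_of_subset subset_rfl, card_latticeN], fun S hS hSp => ?_⟩
  have hLF : ∀ d ∈ distSet N, (distCount (latticeN N) d : ℚ) ≤ F := fun d hd => by
    exact_mod_cast hF ▸ le_sup (f := fun d => distCount (latticeN N) d) hd
  obtain ⟨d₀, hd₀, hSd₀⟩ : ∃ d ∈ distSet N, distCount S d ≠ 0 := by
    refine exists_ne_zero_of_sum_ne_zero ?_
    rw [sum_distCount_of_subset hS, hSp]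
    exact (Nat.choose_pos hp).ne'
  exact sum_lt_sum
    (fun d hd => le_abs_mul_natCast_sub (Nat.cast_nonneg _) (hLF d hd) hbig _)
    ⟨d₀, hd₀, lt_abs_mul_natCast_sub (Nat.cast_nonneg _) (hLF d₀ hd₀) hbig
      (Nat.pos_of_ne_zero hSd₀)⟩

theorem small_subset_error_lower_bound (N p : ℕ) (hN : 2 ≤ N) (hp : 2 ≤ p)
    (F : ℕ) (hF : F = (distSet N).sup (fun d => distCount (latticeN N) d))
    (hbig : 2 * (F : ℚ) < (N : ℚ) ^ 4 / (p : ℚ) ^ 2) :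
    (∑ d ∈ distSet N, distCount (latticeN N) d = (N ^ 2).choose 2) ∧
    ∀ S : Finset (ℤ × ℤ), S ⊆ latticeN N → S.card = p →
      (∑ d ∈ distSet N, (distCount (latticeN N) d : ℚ)) <
        ∑ d ∈ distSet N,
          |((N : ℚ) ^ 4 / (p : ℚ) ^ 2) * (distCount S d : ℚ) -
            (distCount (latticeN N) d : ℚ)| :=
  small_subset_error_lower_bound_general N p hp F hF hbig
end

section
/- Let N ≥ 3 be an odd integer and let K_N = {(x,y) ∈ L_N : x + y is even} be the checkerboard lattice. Then for every even integer a with 2 ≤ a ≤ N−1, the number of unordered pairs of distinct points of K_N with coordinate-difference pattern {a, a} is S_{a,a} = (N−a)² + 1. -/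
open Finset

/-- The checkerboard lattice `K_N = {(x,y) ∈ L_N : x + y even}`. -/
noncomputable def checkerboard (N : ℕ) : Finset (ℤ × ℤ) :=
  (latticeN N).filter (fun p => Even (p.1 + p.2))

/-! An ordered pair of points of `K_N` with pattern `{a, a}` is a point `p` together with an
offset `d ∈ {±a}²`. Since `a` is even, the points `p ∈ K_N` with `p + d ∈ K_N` form a translate
of `K_{N-a}`, so there are `4 |K_{N-a}|` ordered pairs; and a checkerboard of odd side `M`
has `(M² + 1) / 2` points. -/

theorem card_filter_sub_mem {α : Type*} [AddCommGroup α] [DecidableEq α] (S D : Finset α) :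
    #((S ×ˢ S).filter (fun p => p.2 - p.1 ∈ D)) = ∑ d ∈ D, #(S.filter (· + d ∈ S)) := by
  rw [card_eq_sum_card_fiberwise (s := (S ×ˢ S).filter (fun p => p.2 - p.1 ∈ D))
    (f := fun p => p.2 - p.1) (t := D) fun p hp => (mem_filter.mp hp).2]
  refine sum_congr rfl fun d hd => card_nbij' Prod.fst (fun x => (x, x + d)) ?_ ?_ ?_ ?_
  · rintro ⟨x, y⟩ hp
    simp only [mem_coe, mem_filter, mem_product] at hp ⊢
    obtain ⟨⟨⟨hx, hy⟩, -⟩, rfl⟩ := hp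
    simpa [hx] using hy
  · intro x hx
    simp only [mem_coe, mem_filter, mem_product] at hx ⊢
    simp [hx, hd]
  · rintro ⟨x, y⟩ hp
    simp only [mem_coe, mem_filter] at hp
    obtain ⟨-, rfl⟩ := hp
    simp
  · intro x _
    rfl

theorem card_filter_even_Icc (N : ℕ) :
    #((Icc (0 : ℤ) (N - 1)).filter Even) = (N + 1) / 2 := by
  have h : (Icc (0 : ℤ) (N - 1)).filter Even =
      (range ((N + 1) / 2)).image (fun i : ℕ => 2 * (i : ℤ)) := by
    ext x
    simp only [mem_filter, mem_Icc, mem_image, mem_range, Int.even_iff]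
    constructor
    · rintro ⟨⟨h0, hN⟩, h2⟩
      exact ⟨(x / 2).toNat, by omega, by omega⟩
    · rintro ⟨i, hi, rfl⟩
      omega
  rw [h, card_image_of_injective _ (fun i j hij => by simpa using hij), card_range]

theorem card_filter_odd_Icc (N : ℕ) :
    #((Icc (0 : ℤ) (N - 1)).filter Odd) = N / 2 := by
  have h := card_filter_add_card_filter_not (s := Icc (0 : ℤ) (N - 1)) (p := Even)
  rw [card_filter_even_Icc, Int.card_Icc] at h
  have h' : #((Icc (0 : ℤ) (N - 1)).filter Odd) =
      #((Icc (0 : ℤ) (N - 1)).filter (¬ Even ·)) := by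
    congr 1
    exact filter_congr fun x _ => Int.not_even_iff_odd.symm
  omega

theorem card_checkerboard (N : ℕ) :
    #(checkerboard N) = ((N + 1) / 2) ^ 2 + (N / 2) ^ 2 := by
  set I := Icc (0 : ℤ) (N - 1)
  have h : checkerboard N =
      (I.filter Even ×ˢ I.filter Even) ∪ (I.filter Odd ×ˢ I.filter Odd) := by
    rw [← filter_product, ← filter_product, ← filter_or, checkerboard, latticeN]
    refine filter_congr fun p _ => ?_
    rw [Int.even_add, ← Int.not_even_iff_odd, ← Int.not_even_iff_odd]
    tauto
  have hdisj : Disjoint (I.filter Even ×ˢ I.filter Even) (I.filter Odd ×ˢ I.filter Odd) :=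
    disjoint_product.mpr <| .inl <| disjoint_filter.mpr fun x _ he ho =>
      Int.not_even_iff_odd.mpr ho he
  rw [h, card_union_of_disjoint hdisj, card_product, card_product, card_filter_even_Icc,
    card_filter_odd_Icc, sq, sq]

theorem mem_checkerboard {N : ℕ} {p : ℤ × ℤ} :
    p ∈ checkerboard N ↔
      (0 ≤ p.1 ∧ p.1 ≤ N - 1) ∧ (0 ≤ p.2 ∧ p.2 ≤ N - 1) ∧ Even (p.1 + p.2) := by
  simp only [checkerboard, latticeN, mem_filter, mem_product, mem_Icc, and_assoc]

theorem card_filter_add_mem_checkerboard {N M : ℕ} {a : ℤ} (hNM : (N : ℤ) = M + a)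
    (ha : Even a) {d : ℤ × ℤ} (hd₁ : |d.1| = a) (hd₂ : |d.2| = a) :
    #((checkerboard N).filter (· + d ∈ checkerboard N)) = #(checkerboard M) := by
  -- `c` is `0` or `a` in each coordinate, so translating by it preserves the parity of `x + y`.
  set c : ℤ × ℤ := (max 0 (-d.1), max 0 (-d.2))
  rw [Int.even_iff] at ha
  rw [abs_eq_max_neg] at hd₁ hd₂
  refine card_nbij' (· - c) (· + c) ?_ ?_ ?_ ?_
  · intro p hp
    simp only [mem_coe, mem_filter, mem_checkerboard, Int.even_iff, Prod.fst_add, Prod.snd_add,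
      Prod.fst_sub, Prod.snd_sub, c] at hp ⊢
    omega
  · intro p hp
    simp only [mem_coe, mem_filter, mem_checkerboard, Int.even_iff, Prod.fst_add, Prod.snd_add,
      c] at hp ⊢
    omega
  · intro p _
    simp
  · intro p _
    simp

theorem pairCount_self_eq {S : Finset (ℤ × ℤ)} {a : ℤ} (ha : 0 < a) :
    pairCount S a a =
      #((S ×ˢ S).filter (fun p => p.2 - p.1 ∈ ({a, -a} ×ˢ {a, -a} : Finset (ℤ × ℤ)))) / 2 := by
  unfold pairCount
  congr 2
  refine filter_congr fun p _ => ?_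
  obtain ⟨⟨x₁, y₁⟩, ⟨x₂, y₂⟩⟩ := p
  simp only [or_self, ne_eq, Prod.mk.injEq, Prod.fst_sub, Prod.snd_sub, mem_product,
    mem_insert, mem_singleton, abs_eq ha.le]
  omega

theorem checkerboard_diagonal_odd_N_even_a_general (N : ℕ) (hNodd : Odd N)
    (a : ℤ) (ha : Even a) (ha2 : 2 ≤ a) (haN : a ≤ (N : ℤ) - 1) :
    (pairCount (checkerboard N) a a : ℤ) = ((N : ℤ) - a) ^ 2 + 1 := by
  obtain ⟨M, hM⟩ : ∃ M : ℕ, (N : ℤ) = M + a := ⟨(N - a).toNat, by omega⟩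
  have hdiag : ∀ d ∈ ({a, -a} ×ˢ {a, -a} : Finset (ℤ × ℤ)), |d.1| = a ∧ |d.2| = a := by
    intro d hd
    simp only [mem_product, mem_insert, mem_singleton] at hd
    rw [abs_eq (by omega), abs_eq (by omega)]
    exact hd
  have hcount : ∑ d ∈ ({a, -a} ×ˢ {a, -a} : Finset (ℤ × ℤ)),
      #((checkerboard N).filter (· + d ∈ checkerboard N)) = 4 * #(checkerboard M) := by
    rw [sum_congr rfl fun d hd =>
      card_filter_add_mem_checkerboard hM ha (hdiag d hd).1 (hdiag d hd).2, sum_const,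
      card_product, card_pair (by omega), smul_eq_mul]
  obtain ⟨k, rfl⟩ : ∃ k, M = 2 * k + 1 := by
    obtain ⟨n, rfl⟩ := hNodd
    obtain ⟨b, rfl⟩ := ha
    exact ⟨n - b.toNat, by omega⟩
  rw [pairCount_self_eq (by omega), card_filter_sub_mem, hcount, card_checkerboard,
    show (2 * k + 1 + 1) / 2 = k + 1 by omega, show (2 * k + 1) / 2 = k by omega,
    show ∀ n, 4 * n / 2 = 2 * n from fun n => by omega, hM]
  push_cast
  ring

theorem checkerboard_diagonal_odd_N_even_a (N : ℕ) (hN : 3 ≤ N) (hNodd : Odd N)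
    (a : ℤ) (ha : Even a) (ha2 : 2 ≤ a) (haN : a ≤ (N : ℤ) - 1) :
    (pairCount (checkerboard N) a a : ℤ) = ((N : ℤ) - a) ^ 2 + 1 :=
  checkerboard_diagonal_odd_N_even_a_general N hNodd a ha ha2 haN
end
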